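/- In the C major tonality, the cadential sets k₁ = {II, V}, k₂ = {II, III}, k₃ = {III, IV}, k₄ = {IV, V}, and k₅ = {VII} are cadences: each set of triads occurs in exactly one major tonality (no transposition of the C major scale contains all the triads of the set), and each is minimal with this property. -/

import Mathlib

/-- The major scale with tonic t, as a function from scale degrees. -/
def majorScale (t : ZMod 12) : Fin 7 → ZMod 12 :=
  fun i => t + ![0, 2, 4, 5, 7, 9, 11] i

/-- The triad on degree i of the major tonality with tonic t. -/
def triad (t : ZMod 12) (i : Fin 7) : Set (ZMod 12) :=
  {majorScale t i, majorScale t (i + 2), majorScale t (i + 4)}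

/-- The major tonality with tonic t: the set of its seven degree triads. -/
def tonality (t : ZMod 12) : Set (Set (ZMod 12)) := Set.range (triad t)

/-- A cadential set for C major: a set of triads of C contained in no other
major tonality. -/
def IsCadentialSet (S : Set (Set (ZMod 12))) : Prop :=
  S ⊆ tonality 0 ∧ ∀ t : ZMod 12, S ⊆ tonality t → t = 0

/-- A cadence: a minimal cadential set. -/
def IsCadence (S : Set (Set (ZMod 12))) : Prop :=
  IsCadentialSet S ∧ ∀ S' ⊂ S, ¬ IsCadentialSet S'

/-! A proper subset of one of these sets is empty or a single triad, and each of the triads II,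
III, IV, V also belongs to another tonality (II and IV to F major, III and V to G major), so no
proper subset is cadential. That no tonality other than C contains the whole set is a finite
check over the twelve tonics. -/

lemma IsCadentialSet.not_subset_tonality {S : Set (Set (ZMod 12))} (hS : IsCadentialSet S)
    {t : ZMod 12} (ht : t ≠ 0) : ¬ S ⊆ tonality t :=
  fun h => ht (hS.2 t h)

lemma isCadence_singleton {A : Set (ZMod 12)} (hA : A ∈ tonality 0)
    (h : ∀ t, A ∈ tonality t → t = 0) : IsCadence {A} := by
  refine ⟨⟨Set.singleton_subset_iff.2 hA, fun t ht => h t (ht rfl)⟩, fun S' hS' hcad => ?_⟩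
  rw [Set.ssubset_singleton_iff.1 hS'] at hcad
  exact hcad.not_subset_tonality (t := 1) (by decide) (Set.empty_subset _)

lemma isCadence_pair {A B : Set (ZMod 12)} (hA : A ∈ tonality 0) (hB : B ∈ tonality 0)
    (hAB : ∀ t, A ∈ tonality t → B ∈ tonality t → t = 0)
    (hA' : ∃ t ≠ 0, A ∈ tonality t) (hB' : ∃ t ≠ 0, B ∈ tonality t) :
    IsCadence {A, B} := by
  refine ⟨⟨Set.pair_subset hA hB, fun t ht => hAB t (ht (.inl rfl)) (ht (.inr rfl))⟩,
    fun S' hS' hcad => ?_⟩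
  obtain ⟨tA, htA, hAtA⟩ := hA'
  obtain ⟨tB, htB, hBtB⟩ := hB'
  rcases Set.subset_pair_iff_eq.1 hS'.1 with rfl | rfl | rfl | rfl
  · exact hcad.not_subset_tonality htA (Set.empty_subset _)
  · exact hcad.not_subset_tonality htA (Set.singleton_subset_iff.2 hAtA)
  · exact hcad.not_subset_tonality htB (Set.singleton_subset_iff.2 hBtB)
  · exact hS'.ne rfl

def triadFinset (t : ZMod 12) (i : Fin 7) : Finset (ZMod 12) :=
  {majorScale t i, majorScale t (i + 2), majorScale t (i + 4)}

lemma coe_triadFinset (t : ZMod 12) (i : Fin 7) :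
    (triadFinset t i : Set (ZMod 12)) = triad t i := by
  simp [triadFinset, triad]

lemma triad_mem_tonality_iff (s t : ZMod 12) (j : Fin 7) :
    triad s j ∈ tonality t ↔ ∃ i, triadFinset t i = triadFinset s j := by
  simp only [tonality, Set.mem_range, ← coe_triadFinset, Finset.coe_inj]

instance (s t : ZMod 12) (j : Fin 7) : Decidable (triad s j ∈ tonality t) :=
  decidable_of_iff _ (triad_mem_tonality_iff s t j).symm

/-- k₁ = {II,V}, k₂ = {II,III}, k₃ = {III,IV}, k₄ = {IV,V}, k₅ = {VII}
are cadences of C major. -/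
theorem cadences_of_C_major :
    IsCadence {triad 0 1, triad 0 4} ∧
    IsCadence {triad 0 1, triad 0 2} ∧
    IsCadence {triad 0 2, triad 0 3} ∧
    IsCadence {triad 0 3, triad 0 4} ∧
    IsCadence {triad 0 6} := by
  refine ⟨isCadence_pair ⟨1, rfl⟩ ⟨4, rfl⟩ ?_ ?_ ?_,
    isCadence_pair ⟨1, rfl⟩ ⟨2, rfl⟩ ?_ ?_ ?_,
    isCadence_pair ⟨2, rfl⟩ ⟨3, rfl⟩ ?_ ?_ ?_,
    isCadence_pair ⟨3, rfl⟩ ⟨4, rfl⟩ ?_ ?_ ?_,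
    isCadence_singleton ⟨6, rfl⟩ ?_⟩ <;> decide
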